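/- (Lemma 2, recovery condition for the nuclear norm quartet test.) Suppose P1, P2, P3, P4 are column-stochastic. Let p, q ∈ ℝ^k and let Δ be a real k×k matrix. Let A_⊥, B_⊥, C_⊥ denote the unfoldings built from middle matrix p qᵀ, and A, B, C those built from middle matrix p qᵀ + Δ. Define the excessive dependence θ := min{ ‖B_⊥‖* − ‖A_⊥‖*, ‖C_⊥‖* − ‖A_⊥‖* }. If ‖Δ‖_F ≤ θ / (k² + k), then ‖A‖* ≤ ‖B‖* and ‖A‖* ≤ ‖C‖*, i.e., the nuclear norm quartet test returns the correct quartet relation. -/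

import Mathlib

/-- The nuclear norm of a real matrix: the sum of its singular values. -/
noncomputable def nuclearNorm {α β : Type*} [Fintype α] [Fintype β] [DecidableEq β]
    (M : Matrix α β ℝ) : ℝ :=
  ∑ i, Real.sqrt ((Matrix.isHermitian_conjTranspose_mul_self M).eigenvalues i)

/-- The Frobenius norm of a real matrix. -/
noncomputable def frobeniusNorm {α β : Type*} [Fintype α] [Fintype β] (M : Matrix α β ℝ) : ℝ :=
  Real.sqrt (∑ i, ∑ j, (M i j) ^ 2)

/-- A matrix is column-stochastic if its entries are nonnegative and each column sums to 1. -/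
def colStochastic {α β : Type*} [Fintype α] (M : Matrix α β ℝ) : Prop :=
  (∀ i j, 0 ≤ M i j) ∧ ∀ j, ∑ i, M i j = 1

/-- The unfolding `A` built from middle matrix `Mmid`. -/
def unfoldA {n k : ℕ} (P1 P2 P3 P4 : Matrix (Fin n) (Fin k) ℝ)
    (Mmid : Matrix (Fin k) (Fin k) ℝ) : Matrix (Fin n × Fin n) (Fin n × Fin n) ℝ :=
  Matrix.of fun r c => ∑ h, ∑ g, P1 r.1 h * P2 r.2 h * Mmid h g * P3 c.1 g * P4 c.2 g

/-- The unfolding `B` built from middle matrix `Mmid`. -/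
def unfoldB {n k : ℕ} (P1 P2 P3 P4 : Matrix (Fin n) (Fin k) ℝ)
    (Mmid : Matrix (Fin k) (Fin k) ℝ) : Matrix (Fin n × Fin n) (Fin n × Fin n) ℝ :=
  Matrix.of fun r c => ∑ h, ∑ g, P1 r.1 h * P2 c.1 h * Mmid h g * P3 r.2 g * P4 c.2 g

/-- The unfolding `C` built from middle matrix `Mmid`. -/
def unfoldC {n k : ℕ} (P1 P2 P3 P4 : Matrix (Fin n) (Fin k) ℝ)
    (Mmid : Matrix (Fin k) (Fin k) ℝ) : Matrix (Fin n × Fin n) (Fin n × Fin n) ℝ :=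
  Matrix.of fun r c => ∑ h, ∑ g, P1 r.1 h * P2 c.1 h * Mmid h g * P3 c.2 g * P4 r.2 g

/-!
The nuclear norm is dual to the spectral norm: `‖M‖* = max tr (Mᵀ X)` over contractions `X`,
the maximum being attained at the polar factor of `M` from its singular value decomposition.
Hence it is subadditive, and a sum `∑ cᵢ uᵢ vᵢᵀ` with `‖uᵢ‖, ‖vᵢ‖ ≤ 1` has nuclear norm at most
`∑ |cᵢ|`. Each unfolding is linear in the middle matrix and expands it in exactly this way, with
Kronecker products of columns of the `Pᵢ` as `uᵢ, vᵢ` (columns of stochastic matrices have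
Euclidean length at most `1`). So adding `Δ` moves each of `‖A‖*, ‖B‖*, ‖C‖*` by at most
`∑ |Δ h g| ≤ k ‖Δ‖_F`, and `2 k ‖Δ‖_F ≤ (k² + k) ‖Δ‖_F ≤ θ` keeps both comparisons.
-/

open Matrix

section NuclearNorm

variable {α β : Type*} [Fintype α] [Fintype β]

def IsContraction (X : Matrix α β ℝ) : Prop :=
  ∀ v : β → ℝ, X *ᵥ v ⬝ᵥ X *ᵥ v ≤ v ⬝ᵥ v

lemma IsContraction.neg {X : Matrix α β ℝ} (hX : IsContraction X) : IsContraction (-X) :=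
  fun v => by simpa only [neg_mulVec, neg_dotProduct, dotProduct_neg, neg_neg] using hX v

lemma abs_dotProduct_le_mul {x y : α → ℝ} {a b : ℝ} (ha : 0 ≤ a) (hb : 0 ≤ b)
    (hx : x ⬝ᵥ x ≤ a ^ 2) (hy : y ⬝ᵥ y ≤ b ^ 2) : |x ⬝ᵥ y| ≤ a * b := by
  apply abs_le_of_sq_le_sq _ (by positivity)
  calc (x ⬝ᵥ y) ^ 2 ≤ (x ⬝ᵥ x) * (y ⬝ᵥ y) := by
        simpa only [dotProduct, sq] using Finset.sum_mul_sq_le_sq_mul_sq Finset.univ x y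
    _ ≤ (a * b) ^ 2 := by
        rw [mul_pow]
        exact mul_le_mul hx hy (Finset.sum_nonneg fun i _ => mul_self_nonneg (y i)) (sq_nonneg a)

lemma mulVec_dotProduct_mulVec (A : Matrix α β ℝ) (z : β → ℝ) :
    A *ᵥ z ⬝ᵥ A *ᵥ z = z ⬝ᵥ (Aᵀ * A) *ᵥ z := by
  rw [← mulVec_mulVec, dotProduct_mulVec z, vecMul_transpose]

lemma trace_transpose_vecMulVec_mul (u : α → ℝ) (v : β → ℝ) (X : Matrix α β ℝ) :
    ((vecMulVec u v)ᵀ * X).trace = u ⬝ᵥ X *ᵥ v := by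
  rw [transpose_vecMulVec, vecMulVec_mul, trace_vecMulVec, dotProduct_comm, dotProduct_mulVec]

lemma sum_abs_le_sqrt_card_mul_frobeniusNorm (M : Matrix α β ℝ) :
    ∑ i : α × β, |M i.1 i.2| ≤ √(Fintype.card α * Fintype.card β : ℝ) * frobeniusNorm M := by
  rw [frobeniusNorm, ← Real.sqrt_mul (by positivity)]
  apply Real.le_sqrt_of_sq_le
  calc (∑ i : α × β, |M i.1 i.2|) ^ 2 ≤ Fintype.card (α × β) * ∑ i : α × β, |M i.1 i.2| ^ 2 :=
        sq_sum_le_card_mul_sum_sq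
    _ = _ := by simp [Fintype.card_prod, sq_abs, Fintype.sum_prod_type]

variable [DecidableEq β]

lemma exists_orthogonal_mul_eq_singularValues (M : Matrix α β ℝ) :
    ∃ (U : Matrix β β ℝ) (σ : β → ℝ), Uᵀ * U = 1 ∧ U * Uᵀ = 1 ∧ (∀ j, 0 ≤ σ j) ∧
      (M * U)ᵀ * (M * U) = diagonal (σ ^ 2) ∧ nuclearNorm M = ∑ j, σ j := by
  set hH := isHermitian_conjTranspose_mul_self M
  set U : Matrix β β ℝ := hH.eigenvectorUnitary.1
  have hU : Uᵀ * (Mᵀ * M) * U = diagonal hH.eigenvalues := by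
    simpa [U, star_eq_conjTranspose] using hH.conjStarAlgAut_star_eigenvectorUnitary
  refine ⟨U, fun j => √(hH.eigenvalues j), ?_, ?_, fun j => Real.sqrt_nonneg _, ?_, rfl⟩
  · rw [← conjTranspose_eq_transpose_of_trivial, ← star_eq_conjTranspose]
    exact Unitary.coe_star_mul_self hH.eigenvectorUnitary
  · rw [← conjTranspose_eq_transpose_of_trivial, ← star_eq_conjTranspose]
    exact Unitary.coe_mul_star_self hH.eigenvectorUnitary
  · have hev := (posSemidef_conjTranspose_mul_self M).eigenvalues_nonneg
    rw [transpose_mul, Matrix.mul_assoc, ← Matrix.mul_assoc Mᵀ, ← Matrix.mul_assoc, hU]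
    congr 1
    funext j
    exact (Real.sq_sqrt (hev j)).symm

lemma trace_transpose_mul_le_nuclearNorm (M X : Matrix α β ℝ) (hX : IsContraction X) :
    (Mᵀ * X).trace ≤ nuclearNorm M := by
  obtain ⟨U, σ, hUU, hUU', hσ, hMU, hnorm⟩ := exists_orthogonal_mul_eq_singularValues M
  have htrace : (Mᵀ * X).trace = ∑ j, (M * U)ᵀ j ⬝ᵥ (X * U)ᵀ j := by
    change _ = ((M * U)ᵀ * (X * U)).trace
    rw [transpose_mul, Matrix.mul_assoc, trace_mul_comm Uᵀ, Matrix.mul_assoc, Matrix.mul_assoc,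
      hUU', Matrix.mul_one]
  rw [htrace, hnorm]
  refine Finset.sum_le_sum fun j _ => le_of_abs_le ?_
  have hXU : (X * U)ᵀ j = X *ᵥ Uᵀ j := by
    ext a
    simp [mulVec, mul_apply, dotProduct]
  have hMUj : (M * U)ᵀ j ⬝ᵥ (M * U)ᵀ j = σ j ^ 2 :=
    (congrFun (congrFun hMU j) j).trans (diagonal_apply_eq _ j)
  have hUj : Uᵀ j ⬝ᵥ Uᵀ j = 1 := (congrFun (congrFun hUU j) j).trans (one_apply_eq j)
  have hXUj : (X * U)ᵀ j ⬝ᵥ (X * U)ᵀ j ≤ 1 ^ 2 := by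
    rw [hXU, one_pow, ← hUj]
    exact hX _
  simpa using abs_dotProduct_le_mul (hσ j) zero_le_one hMUj.le hXUj

lemma exists_isContraction_trace_eq_nuclearNorm (M : Matrix α β ℝ) :
    ∃ X : Matrix α β ℝ, IsContraction X ∧ (Mᵀ * X).trace = nuclearNorm M := by
  obtain ⟨U, σ, hUU, hUU', hσ, hMU, hnorm⟩ := exists_orthogonal_mul_eq_singularValues M
  -- `σ⁻¹ j = 0` when `σ j = 0`, so `XᵀX` is the orthogonal projection onto the row space of `M`.
  refine ⟨M * U * diagonal σ⁻¹ * Uᵀ, fun v => ?_, ?_⟩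
  · have hv : Uᵀ *ᵥ v ⬝ᵥ Uᵀ *ᵥ v = v ⬝ᵥ v := by
      rw [mulVec_dotProduct_mulVec, transpose_transpose, hUU', one_mulVec]
    rw [← hv, ← mulVec_mulVec, ← mulVec_mulVec, mulVec_dotProduct_mulVec, hMU]
    set w := Uᵀ *ᵥ v
    simp only [mulVec_diagonal, dotProduct]
    refine Finset.sum_le_sum fun j _ => ?_
    have hσσ : 0 ≤ σ j * σ⁻¹ j := mul_nonneg (hσ j) (inv_nonneg.2 (hσ j))
    calc σ⁻¹ j * w j * ((σ ^ 2) j * (σ⁻¹ j * w j)) = (σ j * σ⁻¹ j) ^ 2 * (w j * w j) := by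
          simp only [Pi.pow_apply, Pi.inv_apply]; ring
      _ ≤ w j * w j :=
          mul_le_of_le_one_left (mul_self_nonneg _) (pow_le_one₀ hσσ mul_inv_le_one)
  · calc (Mᵀ * (M * U * diagonal σ⁻¹ * Uᵀ)).trace
          = ((M * U)ᵀ * (M * U) * diagonal σ⁻¹).trace := by
            rw [← Matrix.mul_assoc, trace_mul_comm, transpose_mul]
            simp only [Matrix.mul_assoc]
      _ = nuclearNorm M := by
            rw [hMU, diagonal_mul_diagonal, trace_diagonal, hnorm]
            exact Finset.sum_congr rfl fun j _ => by simp [sq, mul_self_mul_inv]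

lemma nuclearNorm_add_le (M N : Matrix α β ℝ) :
    nuclearNorm (M + N) ≤ nuclearNorm M + nuclearNorm N := by
  obtain ⟨X, hX, hMN⟩ := exists_isContraction_trace_eq_nuclearNorm (M + N)
  rw [← hMN, transpose_add, Matrix.add_mul, trace_add]
  exact add_le_add (trace_transpose_mul_le_nuclearNorm M X hX)
    (trace_transpose_mul_le_nuclearNorm N X hX)

lemma nuclearNorm_neg_le (M : Matrix α β ℝ) : nuclearNorm (-M) ≤ nuclearNorm M := by
  obtain ⟨X, hX, hM⟩ := exists_isContraction_trace_eq_nuclearNorm (-M)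
  rw [← hM, transpose_neg, Matrix.neg_mul, ← Matrix.mul_neg]
  exact trace_transpose_mul_le_nuclearNorm M (-X) hX.neg

lemma abs_nuclearNorm_add_sub_le (M E : Matrix α β ℝ) :
    |nuclearNorm (M + E) - nuclearNorm M| ≤ nuclearNorm E := by
  have hM : nuclearNorm M ≤ nuclearNorm (M + E) + nuclearNorm E := by
    calc nuclearNorm M = nuclearNorm (M + E + -E) := by rw [add_neg_cancel_right]
      _ ≤ nuclearNorm (M + E) + nuclearNorm (-E) := nuclearNorm_add_le _ _
      _ ≤ nuclearNorm (M + E) + nuclearNorm E := by gcongr; exact nuclearNorm_neg_le E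
  exact abs_sub_le_iff.2 ⟨by linarith [nuclearNorm_add_le M E], by linarith⟩

lemma nuclearNorm_sum_smul_vecMulVec_le {ι : Type*} [Fintype ι] (c : ι → ℝ)
    (u : ι → α → ℝ) (v : ι → β → ℝ) (hu : ∀ i, u i ⬝ᵥ u i ≤ 1) (hv : ∀ i, v i ⬝ᵥ v i ≤ 1) :
    nuclearNorm (∑ i, c i • vecMulVec (u i) (v i)) ≤ ∑ i, |c i| := by
  obtain ⟨X, hX, hnorm⟩ := exists_isContraction_trace_eq_nuclearNorm
    (∑ i, c i • vecMulVec (u i) (v i))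
  rw [← hnorm, transpose_sum, Matrix.sum_mul, trace_sum]
  refine Finset.sum_le_sum fun i _ => ?_
  rw [transpose_smul, smul_mul, trace_smul, trace_transpose_vecMulVec_mul, smul_eq_mul]
  have hXv : X *ᵥ v i ⬝ᵥ X *ᵥ v i ≤ 1 ^ 2 := by rw [one_pow]; exact (hX _).trans (hv i)
  calc c i * (u i ⬝ᵥ X *ᵥ v i) ≤ |c i| * |u i ⬝ᵥ X *ᵥ v i| := by
        rw [← abs_mul]; exact le_abs_self _
    _ ≤ |c i| * (1 * 1) := by
        gcongr
        exact abs_dotProduct_le_mul zero_le_one zero_le_one (by rw [one_pow]; exact hu i) hXv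
    _ = |c i| := by rw [mul_one, mul_one]

lemma abs_nuclearNorm_sum_add_sub_le {κ κ' : Type*} [Fintype κ] [Fintype κ']
    (u : κ × κ' → α → ℝ) (v : κ × κ' → β → ℝ)
    (hu : ∀ i, u i ⬝ᵥ u i ≤ 1) (hv : ∀ i, v i ⬝ᵥ v i ≤ 1) (M Δ : Matrix κ κ' ℝ) :
    |nuclearNorm (∑ i : κ × κ', (M + Δ) i.1 i.2 • vecMulVec (u i) (v i)) -
        nuclearNorm (∑ i : κ × κ', M i.1 i.2 • vecMulVec (u i) (v i))| ≤
      √(Fintype.card κ * Fintype.card κ' : ℝ) * frobeniusNorm Δ := by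
  simp only [Matrix.add_apply, add_smul, Finset.sum_add_distrib]
  exact (abs_nuclearNorm_add_sub_le _ _).trans
    ((nuclearNorm_sum_smul_vecMulVec_le _ u v hu hv).trans
      (sum_abs_le_sqrt_card_mul_frobeniusNorm Δ))

end NuclearNorm

section ColStochastic

variable {α β κ κ' : Type*} [Fintype α] [Fintype β]

lemma colStochastic.sum_sq_le_one {P : Matrix α κ ℝ} (hP : colStochastic P) (j : κ) :
    ∑ x, P x j ^ 2 ≤ 1 := by
  have := Finset.sum_sq_le_sq_sum_of_nonneg (s := Finset.univ) fun x _ => hP.1 x j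
  rwa [hP.2 j, one_pow] at this

lemma dotProduct_self_prod_le_one_of_colStochastic {P : Matrix α κ ℝ} {Q : Matrix β κ' ℝ}
    (hP : colStochastic P) (hQ : colStochastic Q) (h : κ) (g : κ') :
    (fun r : α × β => P r.1 h * Q r.2 g) ⬝ᵥ (fun r : α × β => P r.1 h * Q r.2 g) ≤ 1 := by
  have hprod : (fun r : α × β => P r.1 h * Q r.2 g) ⬝ᵥ (fun r : α × β => P r.1 h * Q r.2 g) =
      (∑ x, P x h ^ 2) * ∑ y, Q y g ^ 2 := by
    simp only [dotProduct, Fintype.sum_prod_type, Finset.sum_mul_sum]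
    exact Finset.sum_congr rfl fun x _ => Finset.sum_congr rfl fun y _ => by ring
  rw [hprod]
  exact mul_le_one₀ (hP.sum_sq_le_one h) (Finset.sum_nonneg fun y _ => sq_nonneg _)
    (hQ.sum_sq_le_one g)

end ColStochastic

section Quartet

variable {n k : ℕ}

lemma unfoldA_eq_sum (P1 P2 P3 P4 : Matrix (Fin n) (Fin k) ℝ) (M : Matrix (Fin k) (Fin k) ℝ) :
    unfoldA P1 P2 P3 P4 M = ∑ i : Fin k × Fin k,
      M i.1 i.2 • vecMulVec (fun r => P1 r.1 i.1 * P2 r.2 i.1)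
        (fun c => P3 c.1 i.2 * P4 c.2 i.2) := by
  ext r c
  simp only [unfoldA, of_apply, Matrix.sum_apply, Matrix.smul_apply, vecMulVec_apply, smul_eq_mul,
    Fintype.sum_prod_type]
  exact Finset.sum_congr rfl fun h _ => Finset.sum_congr rfl fun g _ => by ring

lemma unfoldB_eq_sum (P1 P2 P3 P4 : Matrix (Fin n) (Fin k) ℝ) (M : Matrix (Fin k) (Fin k) ℝ) :
    unfoldB P1 P2 P3 P4 M = ∑ i : Fin k × Fin k,
      M i.1 i.2 • vecMulVec (fun r => P1 r.1 i.1 * P3 r.2 i.2)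
        (fun c => P2 c.1 i.1 * P4 c.2 i.2) := by
  ext r c
  simp only [unfoldB, of_apply, Matrix.sum_apply, Matrix.smul_apply, vecMulVec_apply, smul_eq_mul,
    Fintype.sum_prod_type]
  exact Finset.sum_congr rfl fun h _ => Finset.sum_congr rfl fun g _ => by ring

lemma unfoldC_eq_sum (P1 P2 P3 P4 : Matrix (Fin n) (Fin k) ℝ) (M : Matrix (Fin k) (Fin k) ℝ) :
    unfoldC P1 P2 P3 P4 M = ∑ i : Fin k × Fin k,
      M i.1 i.2 • vecMulVec (fun r => P1 r.1 i.1 * P4 r.2 i.2)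
        (fun c => P2 c.1 i.1 * P3 c.2 i.2) := by
  ext r c
  simp only [unfoldC, of_apply, Matrix.sum_apply, Matrix.smul_apply, vecMulVec_apply, smul_eq_mul,
    Fintype.sum_prod_type]
  exact Finset.sum_congr rfl fun h _ => Finset.sum_congr rfl fun g _ => by ring

variable {P1 P2 P3 P4 : Matrix (Fin n) (Fin k) ℝ} (h1 : colStochastic P1) (h2 : colStochastic P2)
  (h3 : colStochastic P3) (h4 : colStochastic P4) (M Δ : Matrix (Fin k) (Fin k) ℝ)
include h1 h2 h3 h4

lemma abs_nuclearNorm_unfoldA_add_sub_le :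
    |nuclearNorm (unfoldA P1 P2 P3 P4 (M + Δ)) - nuclearNorm (unfoldA P1 P2 P3 P4 M)| ≤
      k * frobeniusNorm Δ := by
  simpa [unfoldA_eq_sum] using abs_nuclearNorm_sum_add_sub_le _ _
    (fun i => dotProduct_self_prod_le_one_of_colStochastic h1 h2 i.1 i.1)
    (fun i => dotProduct_self_prod_le_one_of_colStochastic h3 h4 i.2 i.2) M Δ

lemma abs_nuclearNorm_unfoldB_add_sub_le :
    |nuclearNorm (unfoldB P1 P2 P3 P4 (M + Δ)) - nuclearNorm (unfoldB P1 P2 P3 P4 M)| ≤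
      k * frobeniusNorm Δ := by
  simpa [unfoldB_eq_sum] using abs_nuclearNorm_sum_add_sub_le _ _
    (fun i => dotProduct_self_prod_le_one_of_colStochastic h1 h3 i.1 i.2)
    (fun i => dotProduct_self_prod_le_one_of_colStochastic h2 h4 i.1 i.2) M Δ

lemma abs_nuclearNorm_unfoldC_add_sub_le :
    |nuclearNorm (unfoldC P1 P2 P3 P4 (M + Δ)) - nuclearNorm (unfoldC P1 P2 P3 P4 M)| ≤
      k * frobeniusNorm Δ := by
  simpa [unfoldC_eq_sum] using abs_nuclearNorm_sum_add_sub_le _ _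
    (fun i => dotProduct_self_prod_le_one_of_colStochastic h1 h4 i.1 i.2)
    (fun i => dotProduct_self_prod_le_one_of_colStochastic h2 h3 i.1 i.2) M Δ

end Quartet

theorem quartet_recovery_condition_general (n k : ℕ) (hk : 0 < k)
    (P1 P2 P3 P4 : Matrix (Fin n) (Fin k) ℝ)
    (h1 : colStochastic P1) (h2 : colStochastic P2)
    (h3 : colStochastic P3) (h4 : colStochastic P4)
    (p q : Fin k → ℝ) (Δ : Matrix (Fin k) (Fin k) ℝ)
    (θ : ℝ)
    (hθ : θ = min
      (nuclearNorm (unfoldB P1 P2 P3 P4 (Matrix.vecMulVec p q)) -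
        nuclearNorm (unfoldA P1 P2 P3 P4 (Matrix.vecMulVec p q)))
      (nuclearNorm (unfoldC P1 P2 P3 P4 (Matrix.vecMulVec p q)) -
        nuclearNorm (unfoldA P1 P2 P3 P4 (Matrix.vecMulVec p q))))
    (hΔ : frobeniusNorm Δ ≤ θ / ((k : ℝ) ^ 2 + k)) :
    nuclearNorm (unfoldA P1 P2 P3 P4 (Matrix.vecMulVec p q + Δ)) ≤
      nuclearNorm (unfoldB P1 P2 P3 P4 (Matrix.vecMulVec p q + Δ)) ∧
    nuclearNorm (unfoldA P1 P2 P3 P4 (Matrix.vecMulVec p q + Δ)) ≤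
      nuclearNorm (unfoldC P1 P2 P3 P4 (Matrix.vecMulVec p q + Δ)) := by
  have hA := abs_le.1 (abs_nuclearNorm_unfoldA_add_sub_le h1 h2 h3 h4 (vecMulVec p q) Δ)
  have hB := abs_le.1 (abs_nuclearNorm_unfoldB_add_sub_le h1 h2 h3 h4 (vecMulVec p q) Δ)
  have hC := abs_le.1 (abs_nuclearNorm_unfoldC_add_sub_le h1 h2 h3 h4 (vecMulVec p q) Δ)
  have hmargin : 2 * (k * frobeniusNorm Δ) ≤ θ := by
    have hk1 : (1 : ℝ) ≤ k := by exact_mod_cast hk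
    have hΔ0 : 0 ≤ frobeniusNorm Δ := Real.sqrt_nonneg _
    calc 2 * (k * frobeniusNorm Δ) ≤ ((k : ℝ) ^ 2 + k) * frobeniusNorm Δ := by nlinarith
      _ ≤ θ := (le_div_iff₀' (by positivity)).1 hΔ
  have hθB : θ ≤ _ := hθ ▸ min_le_left _ _
  have hθC : θ ≤ _ := hθ ▸ min_le_right _ _
  constructor <;> linarith

/-- Lemma 2 (recovery condition): if `‖Δ‖_F ≤ θ/(k²+k)` where `θ` is the excessive dependence,
then the nuclear norm quartet test returns the correct quartet relation. -/
theorem quartet_recovery_condition (n k : ℕ) (hn : 0 < n) (hk : 0 < k)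
    (P1 P2 P3 P4 : Matrix (Fin n) (Fin k) ℝ)
    (h1 : colStochastic P1) (h2 : colStochastic P2)
    (h3 : colStochastic P3) (h4 : colStochastic P4)
    (p q : Fin k → ℝ) (Δ : Matrix (Fin k) (Fin k) ℝ)
    (θ : ℝ)
    (hθ : θ = min
      (nuclearNorm (unfoldB P1 P2 P3 P4 (Matrix.vecMulVec p q)) -
        nuclearNorm (unfoldA P1 P2 P3 P4 (Matrix.vecMulVec p q)))
      (nuclearNorm (unfoldC P1 P2 P3 P4 (Matrix.vecMulVec p q)) -
        nuclearNorm (unfoldA P1 P2 P3 P4 (Matrix.vecMulVec p q))))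
    (hΔ : frobeniusNorm Δ ≤ θ / ((k : ℝ) ^ 2 + k)) :
    nuclearNorm (unfoldA P1 P2 P3 P4 (Matrix.vecMulVec p q + Δ)) ≤
      nuclearNorm (unfoldB P1 P2 P3 P4 (Matrix.vecMulVec p q + Δ)) ∧
    nuclearNorm (unfoldA P1 P2 P3 P4 (Matrix.vecMulVec p q + Δ)) ≤
      nuclearNorm (unfoldC P1 P2 P3 P4 (Matrix.vecMulVec p q + Δ)) :=
  quartet_recovery_condition_general n k hk P1 P2 P3 P4 h1 h2 h3 h4 p q Δ θ hθ hΔ
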